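/- arXiv:2010.13599 — 2 statements merged into one kernel-verified Lean document; each statement's English description precedes it below -/
import Mathlib

section
/- Cross-covariance identity for non-interfering pairs: Let i ≠ j be indices such that μ_i(z) does not depend on the j-th coordinate of z (μ_i(z[j:=0]) = μ_i(z[j:=1]) for all z) and μ_j(z) does not depend on the i-th coordinate of z. Then Cov[(Z_i/p − (1−Z_i)/(1−p)) μ_i(Z), (Z_j/p − (1−Z_j)/(1−p)) μ_j(Z)] = Σ_{a∈{0,1}} Σ_{b∈{0,1}} (−1)^{a+b} Cov[μ_i^{(a)}(Z), μ_j^{(b)}(Z)]. -/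
/-- Expectation with respect to the Bernoulli(p) product measure on `{0,1}^N`. -/
noncomputable def bexp {N : ℕ} (p : ℝ) (f : (Fin N → Bool) → ℝ) : ℝ :=
  ∑ z : Fin N → Bool, (∏ i, if z i then p else 1 - p) * f z

/-- Covariance under the Bernoulli(p) product measure. -/
noncomputable def bcov {N : ℕ} (p : ℝ) (f g : (Fin N → Bool) → ℝ) : ℝ :=
  bexp p (fun z => f z * g z) - bexp p f * bexp p g

/-- `(−1)^a` for `a ∈ {0,1}` (with `true ↦ −1`, `false ↦ 1`). -/
def sgn (a : Bool) : ℝ := if a then -1 else 1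

/-!
Conditioning on `Z_k` gives `E[f] = p E[f(Z[k:=1])] + (1-p) E[f(Z[k:=0])]`, so the
Horvitz–Thompson weight `w(Z_k) = Z_k/p - (1-Z_k)/(1-p)` can be pulled out of an expectation:
`E[w(Z_k) f(Z)] = E[f(Z[k:=1])] - E[f(Z[k:=0])]`. In the cross moment
`E[w(Z_i) μ_i(Z) w(Z_j) μ_j(Z)]` the factor `w(Z_j) μ_j(Z)` does not see `Z_i`, and after
pulling out `w(Z_i)` the factors `μ_i^{(a)}` do not see `Z_j`, so both weights come out one after
the other; the cross moment and the product of the means then expand into the same signed sums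
over `a, b ∈ {0,1}`.
-/

open Function Finset

@[simp]
theorem Equiv.funSplitAt_symm_apply_self {ι α : Type*} [DecidableEq ι] (k : ι) (b : α)
    (y : {l // l ≠ k} → α) : (Equiv.funSplitAt k α).symm (b, y) k = b := by
  simp [Equiv.funSplitAt]

@[simp]
theorem Equiv.funSplitAt_symm_apply_ne {ι α : Type*} [DecidableEq ι] (k : ι) (b : α)
    (y : {l // l ≠ k} → α) (l : {l // l ≠ k}) :
    (Equiv.funSplitAt k α).symm (b, y) l = y l := by
  simp [Equiv.funSplitAt, l.2]

theorem Equiv.update_funSplitAt_symm {ι α : Type*} [DecidableEq ι] (k : ι) (b a : α)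
    (y : {l // l ≠ k} → α) :
    update ((Equiv.funSplitAt k α).symm (b, y)) k a = (Equiv.funSplitAt k α).symm (a, y) := by
  ext l
  by_cases h : l = k
  · subst h; simp
  · simp [h]

theorem Fintype.sum_prod_mul_eq_sum_mul_sum_update {ι α R : Type*} [Fintype ι] [DecidableEq ι]
    [Fintype α] [CommSemiring R] (w : α → R) (hw : ∑ a, w a = 1) (k : ι)
    (f : (ι → α) → R) :
    ∑ z, (∏ l, w (z l)) * f z = ∑ a, w a * ∑ z, (∏ l, w (z l)) * f (update z k a) := by
  simp only [← (Equiv.funSplitAt k α).symm.sum_comp, Fintype.sum_prod_type,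
    Fintype.prod_eq_mul_prod_subtype_ne _ k, Equiv.update_funSplitAt_symm,
    Equiv.funSplitAt_symm_apply_self, Equiv.funSplitAt_symm_apply_ne, mul_assoc, ← mul_sum]
  simp only [← sum_mul, hw, one_mul]

theorem apply_update_eq_of_apply_update_false_eq_true {ι β : Type*} [DecidableEq ι]
    {f : (ι → Bool) → β} {k : ι}
    (h : ∀ z, f (update z k false) = f (update z k true)) (z : ι → Bool) (a : Bool) :
    f (update z k a) = f z := by
  conv_rhs => rw [← update_eq_self k z]
  cases a <;> cases z k <;> simp [h]

noncomputable def htWeight (p : ℝ) (b : Bool) : ℝ :=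
  (if b then 1 else 0) / p - (1 - if b then 1 else 0) / (1 - p)

section Bernoulli

variable {N : ℕ} {p : ℝ}

theorem bexp_const_mul (c : ℝ) (f : (Fin N → Bool) → ℝ) :
    bexp p (fun z => c * f z) = c * bexp p f := by
  simp only [bexp, mul_sum]
  exact sum_congr rfl fun z _ => by ring

theorem bexp_eq_add_bexp_update (k : Fin N) (f : (Fin N → Bool) → ℝ) :
    bexp p f = p * bexp p (fun z => f (update z k true))
      + (1 - p) * bexp p (fun z => f (update z k false)) := by
  unfold bexp
  rw [Fintype.sum_prod_mul_eq_sum_mul_sum_update (fun b => if b then p else 1 - p)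
    (by simp) k f, Fintype.sum_bool]
  simp

theorem bexp_htWeight_mul (hp0 : p ≠ 0) (hp1 : 1 - p ≠ 0) (k : Fin N)
    (f : (Fin N → Bool) → ℝ) :
    bexp p (fun z => htWeight p (z k) * f z)
      = bexp p (fun z => f (update z k true)) - bexp p (fun z => f (update z k false)) := by
  rw [bexp_eq_add_bexp_update k]
  simp only [update_self, htWeight, ↓reduceIte, Bool.false_eq_true, bexp_const_mul]
  field_simp
  ring

theorem bexp_htWeight_mul_mul (hp0 : p ≠ 0) (hp1 : 1 - p ≠ 0) {k : Fin N}
    {G : (Fin N → Bool) → ℝ} (hG : ∀ z a, G (update z k a) = G z) (F : (Fin N → Bool) → ℝ) :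
    bexp p (fun z => htWeight p (z k) * F z * G z)
      = bexp p (fun z => F (update z k true) * G z)
        - bexp p (fun z => F (update z k false) * G z) := by
  simpa only [hG, mul_assoc] using bexp_htWeight_mul hp0 hp1 k (fun z => F z * G z)

theorem bexp_htWeight_mul_htWeight_mul (hp0 : p ≠ 0) (hp1 : 1 - p ≠ 0) {i j : Fin N}
    (hij : i ≠ j) {F G : (Fin N → Bool) → ℝ} (hF : ∀ z a, F (update z j a) = F z)
    (hG : ∀ z a, G (update z i a) = G z) :
    bexp p (fun z => htWeight p (z i) * F z * (htWeight p (z j) * G z))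
      = ∑ a : Bool, ∑ b : Bool, sgn a * sgn b *
          bexp p (fun z => F (update z i a) * G (update z j b)) := by
  have hwG : ∀ z a, htWeight p (update z i a j) * G (update z i a) = htWeight p (z j) * G z :=
    fun z a => by rw [update_of_ne hij.symm, hG]
  have hFa : ∀ a z b, F (update (update z j b) i a) = F (update z i a) :=
    fun a z b => by rw [update_comm hij.symm, hF]
  have pull_j : ∀ a, bexp p (fun z => F (update z i a) * (htWeight p (z j) * G z))
      = bexp p (fun z => F (update z i a) * G (update z j true))
        - bexp p (fun z => F (update z i a) * G (update z j false)) := fun a => by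
    simpa only [mul_comm] using
      bexp_htWeight_mul_mul hp0 hp1 (G := fun z => F (update z i a)) (hFa a) G
  rw [bexp_htWeight_mul_mul hp0 hp1 (G := fun z => htWeight p (z j) * G z) hwG F,
    pull_j, pull_j]
  simp only [Fintype.sum_bool, sgn, ↓reduceIte, Bool.false_eq_true]
  ring

end Bernoulli

theorem ht_cross_covariance_general (N : ℕ) (p : ℝ) (hp0 : 0 < p) (hp1 : p < 1)
    (μ : Fin N → (Fin N → Bool) → ℝ) (i j : Fin N) (hij : i ≠ j)
    (hi : ∀ z : Fin N → Bool,
      μ i (Function.update z j false) = μ i (Function.update z j true))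
    (hj : ∀ z : Fin N → Bool,
      μ j (Function.update z i false) = μ j (Function.update z i true)) :
    bcov p
        (fun z => ((if z i then (1 : ℝ) else 0) / p
          - (1 - if z i then (1 : ℝ) else 0) / (1 - p)) * μ i z)
        (fun z => ((if z j then (1 : ℝ) else 0) / p
          - (1 - if z j then (1 : ℝ) else 0) / (1 - p)) * μ j z)
      = ∑ a : Bool, ∑ b : Bool, sgn a * sgn b *
          bcov p (fun z => μ i (Function.update z i a))
            (fun z => μ j (Function.update z j b)) := by
  have hp0' : p ≠ 0 := hp0.ne'
  have hp1' : 1 - p ≠ 0 := sub_ne_zero.mpr hp1.ne'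
  show bexp p (fun z => htWeight p (z i) * μ i z * (htWeight p (z j) * μ j z))
      - bexp p (fun z => htWeight p (z i) * μ i z) * bexp p (fun z => htWeight p (z j) * μ j z)
    = _
  rw [bexp_htWeight_mul_htWeight_mul hp0' hp1' hij
      (apply_update_eq_of_apply_update_false_eq_true hi)
      (apply_update_eq_of_apply_update_false_eq_true hj),
    bexp_htWeight_mul hp0' hp1', bexp_htWeight_mul hp0' hp1']
  simp only [bcov, Fintype.sum_bool, sgn, ↓reduceIte, Bool.false_eq_true]
  ring

/-- Cross-covariance identity for non-interfering pairs: if `μ_i` does not depend on the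
`j`-th coordinate and `μ_j` does not depend on the `i`-th coordinate, then
`Cov[(Z_i/p − (1−Z_i)/(1−p)) μ_i(Z), (Z_j/p − (1−Z_j)/(1−p)) μ_j(Z)]
  = Σ_{a,b∈{0,1}} (−1)^{a+b} Cov[μ_i^{(a)}(Z), μ_j^{(b)}(Z)]`. -/
theorem ht_cross_covariance (N : ℕ) (hN : 1 ≤ N) (p : ℝ) (hp0 : 0 < p) (hp1 : p < 1)
    (μ : Fin N → (Fin N → Bool) → ℝ) (i j : Fin N) (hij : i ≠ j)
    (hi : ∀ z : Fin N → Bool,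
      μ i (Function.update z j false) = μ i (Function.update z j true))
    (hj : ∀ z : Fin N → Bool,
      μ j (Function.update z i false) = μ j (Function.update z i true)) :
    bcov p
        (fun z => ((if z i then (1 : ℝ) else 0) / p
          - (1 - if z i then (1 : ℝ) else 0) / (1 - p)) * μ i z)
        (fun z => ((if z j then (1 : ℝ) else 0) / p
          - (1 - if z j then (1 : ℝ) else 0) / (1 - p)) * μ j z)
      = ∑ a : Bool, ∑ b : Bool, sgn a * sgn b *
          bcov p (fun z => μ i (Function.update z i a))
            (fun z => μ j (Function.update z j b)) :=
  ht_cross_covariance_general N p hp0 hp1 μ i j hij hi hj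
end

section
/- Approximation bound C4.1: Given a dependency structure B, suppose |μ_i(z)| ≤ b for all i and z, and |B(i)| ≤ c̃ for all i. Then for all a, b' ∈ {0,1}: | (1/N²) Σ_{i=1}^N Σ_{j≠i} E[μ_i(Z[i:=a][j:=b']) μ_j(Z[i:=a][j:=b'])] − (1/N²) Σ_{i=1}^N Σ_{j≠i} E[μ_i^{(a)}(Z)] E[μ_j^{(b')}(Z)] | ≤ 2 c̃ b² / N. -/
/-- A dependency structure. -/
def DepStruct {N : ℕ} (p : ℝ) (μ : Fin N → (Fin N → Bool) → ℝ)
    (B : Fin N → Finset (Fin N)) : Prop :=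
  (∀ i, i ∈ B i) ∧
  ∀ i j : Fin N, j ∉ B i →
    (∀ z : Fin N → Bool, μ i (Function.update z j false) = μ i (Function.update z j true)) ∧
    (∀ z : Fin N → Bool, μ j (Function.update z i false) = μ j (Function.update z i true)) ∧
    (∀ a b : Bool, bcov p (fun z => μ i (Function.update z i a))
        (fun z => μ j (Function.update z j b)) = 0)

open Finset Function

section Bernoulli

variable {N : ℕ} {p : ℝ}

lemma sum_prod_bernoulli_weight (p : ℝ) :
    ∑ z : Fin N → Bool, ∏ i, (if z i then p else 1 - p) = 1 := by
  rw [← Fintype.prod_sum (fun (_ : Fin N) (c : Bool) => if c then p else 1 - p)]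
  simp

lemma prod_bernoulli_weight_nonneg (hp0 : 0 ≤ p) (hp1 : p ≤ 1) (z : Fin N → Bool) :
    0 ≤ ∏ i, (if z i then p else 1 - p) :=
  prod_nonneg fun i _ => by split <;> linarith

lemma abs_bexp_le (hp0 : 0 ≤ p) (hp1 : p ≤ 1) {f : (Fin N → Bool) → ℝ} {C : ℝ}
    (hf : ∀ z, |f z| ≤ C) : |bexp p f| ≤ C := by
  have hw := prod_bernoulli_weight_nonneg hp0 hp1 (N := N)
  calc |bexp p f| ≤ ∑ z : Fin N → Bool, |(∏ i, if z i then p else 1 - p) * f z| :=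
        abs_sum_le_sum_abs _ _
    _ ≤ ∑ z : Fin N → Bool, (∏ i, if z i then p else 1 - p) * C := by
        gcongr with z
        rw [abs_mul, abs_of_nonneg (hw z)]
        exact mul_le_mul_of_nonneg_left (hf z) (hw z)
    _ = C := by rw [← sum_mul, sum_prod_bernoulli_weight, one_mul]

lemma abs_bexp_mul_sub_bexp_mul_bexp_le (hp0 : 0 ≤ p) (hp1 : p ≤ 1)
    {f g h k : (Fin N → Bool) → ℝ} {b : ℝ} (hf : ∀ z, |f z| ≤ b) (hg : ∀ z, |g z| ≤ b)
    (hh : ∀ z, |h z| ≤ b) (hk : ∀ z, |k z| ≤ b) :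
    |bexp p (fun z => f z * g z) - bexp p h * bexp p k| ≤ 2 * b ^ 2 := by
  have hb : 0 ≤ b := (abs_nonneg _).trans (hf fun _ => false)
  have hfg : |bexp p (fun z => f z * g z)| ≤ b ^ 2 :=
    abs_bexp_le hp0 hp1 fun z => by
      rw [abs_mul, sq]; exact mul_le_mul (hf z) (hg z) (abs_nonneg _) hb
  have hhk : |bexp p h * bexp p k| ≤ b ^ 2 := by
    rw [abs_mul, sq]
    exact mul_le_mul (abs_bexp_le hp0 hp1 hh) (abs_bexp_le hp0 hp1 hk) (abs_nonneg _) hb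
  linarith [abs_sub (bexp p fun z => f z * g z) (bexp p h * bexp p k)]

end Bernoulli

lemma apply_update_eq_of_update_false_eq_update_true {N : ℕ} {f : (Fin N → Bool) → ℝ}
    {j : Fin N} (hf : ∀ z, f (update z j false) = f (update z j true))
    (z : Fin N → Bool) (c : Bool) : f (update z j c) = f z := by
  conv_rhs => rw [← update_eq_self j z]
  cases c <;> cases hz : z j <;> simp only [hf z]

lemma DepStruct.bexp_mul_update_update_eq {N : ℕ} {p : ℝ} {μ : Fin N → (Fin N → Bool) → ℝ}
    {B : Fin N → Finset (Fin N)} (hB : DepStruct p μ B) {i j : Fin N} (hji : j ≠ i)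
    (hj : j ∉ B i) (a b' : Bool) :
    bexp p (fun z => μ i (update (update z i a) j b') * μ j (update (update z i a) j b'))
      = bexp p (fun z => μ i (update z i a)) * bexp p (fun z => μ j (update z j b')) := by
  obtain ⟨hμi, hμj, hcov⟩ := hB.2 i j hj
  have hprod : (fun z => μ i (update (update z i a) j b') * μ j (update (update z i a) j b'))
      = fun z => μ i (update z i a) * μ j (update z j b') := by
    funext z
    rw [apply_update_eq_of_update_false_eq_update_true hμi, update_comm hji.symm,
      apply_update_eq_of_update_false_eq_update_true hμj]
  rw [hprod, ← sub_eq_zero]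
  exact hcov a b'

lemma abs_sum_le_card_mul_of_eq_zero {ι : Type*} [DecidableEq ι] {s t : Finset ι} {f : ι → ℝ}
    {C : ℝ} (hC : 0 ≤ C) (hzero : ∀ j ∈ s, j ∉ t → f j = 0) (hf : ∀ j ∈ s, |f j| ≤ C) :
    |∑ j ∈ s, f j| ≤ #t * C := by
  rw [← sum_subset inter_subset_left fun j hs hst =>
    hzero j hs fun ht => hst (mem_inter.2 ⟨hs, ht⟩)]
  calc |∑ j ∈ s ∩ t, f j| ≤ ∑ j ∈ s ∩ t, |f j| := abs_sum_le_sum_abs _ _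
    _ ≤ #(s ∩ t) * C := by
        simpa using sum_le_card_nsmul _ _ _ fun j hj => hf j (mem_inter.1 hj).1
    _ ≤ #t * C := by gcongr; exact inter_subset_right

lemma abs_one_div_sq_mul_sum_le {N : ℕ} {R : Fin N → ℝ} {C : ℝ} (hR : ∀ i, |R i| ≤ C) :
    |1 / (N : ℝ) ^ 2 * ∑ i, R i| ≤ C / N := by
  rcases Nat.eq_zero_or_pos N with rfl | hN
  · simp
  have hsum : |∑ i, R i| ≤ N * C := by
    simpa using (abs_sum_le_sum_abs _ _).trans (sum_le_card_nsmul univ _ C fun i _ => hR i)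
  rw [abs_mul, abs_of_nonneg (by positivity)]
  calc 1 / (N : ℝ) ^ 2 * |∑ i, R i| ≤ 1 / (N : ℝ) ^ 2 * (N * C) := by gcongr
    _ = C / N := by field_simp

theorem approx_bound_C41_general
    (N : ℕ) (p : ℝ) (hp0 : 0 < p) (hp1 : p < 1)
    (μ : Fin N → (Fin N → Bool) → ℝ) (B : Fin N → Finset (Fin N))
    (hB : DepStruct p μ B)
    (b : ℝ) (hb : ∀ i z, |μ i z| ≤ b)
    (ctil : ℕ) (hc : ∀ i, (B i).card ≤ ctil)
    (a b' : Bool) :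
    |(1 / (N : ℝ) ^ 2) * ∑ i, ∑ j ∈ Finset.univ.erase i,
        bexp p (fun z =>
          μ i (Function.update (Function.update z i a) j b')
            * μ j (Function.update (Function.update z i a) j b'))
      - (1 / (N : ℝ) ^ 2) * ∑ i, ∑ j ∈ Finset.univ.erase i,
          bexp p (fun z => μ i (Function.update z i a))
            * bexp p (fun z => μ j (Function.update z j b'))|
      ≤ 2 * ctil * b ^ 2 / N := by
  have hrow : ∀ i, |∑ j ∈ univ.erase i,
      (bexp p (fun z => μ i (update (update z i a) j b') * μ j (update (update z i a) j b'))
        - bexp p (fun z => μ i (update z i a)) * bexp p (fun z => μ j (update z j b')))|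
      ≤ ctil * (2 * b ^ 2) := fun i =>
    (abs_sum_le_card_mul_of_eq_zero (t := B i) (by positivity)
      (fun j hj hjB => sub_eq_zero.2 <|
        hB.bexp_mul_update_update_eq (ne_of_mem_erase hj) hjB a b')
      (fun j _ => abs_bexp_mul_sub_bexp_mul_bexp_le hp0.le hp1.le
        (fun _ => hb _ _) (fun _ => hb _ _) (fun _ => hb _ _) (fun _ => hb _ _))).trans
      (by gcongr; exact_mod_cast hc i)
  simp_rw [← mul_sub, ← sum_sub_distrib]
  calc _ ≤ ctil * (2 * b ^ 2) / N := abs_one_div_sq_mul_sum_le hrow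
    _ = 2 * ctil * b ^ 2 / N := by ring

/-- Approximation bound C4.1: given a dependency structure with `|μ_i| ≤ b` and
`|B(i)| ≤ c̃`, for all `a, b' ∈ {0,1}`:
`|(1/N²) Σ_i Σ_{j≠i} E[μ_i(Z[i:=a][j:=b']) μ_j(Z[i:=a][j:=b'])]
  − (1/N²) Σ_i Σ_{j≠i} E[μ_i^{(a)}(Z)] E[μ_j^{(b')}(Z)]| ≤ 2 c̃ b²/N`. -/
theorem approx_bound_C41
    (N : ℕ) (hN : 1 ≤ N) (p : ℝ) (hp0 : 0 < p) (hp1 : p < 1)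
    (μ : Fin N → (Fin N → Bool) → ℝ) (B : Fin N → Finset (Fin N))
    (hB : DepStruct p μ B)
    (b : ℝ) (hb : ∀ i z, |μ i z| ≤ b)
    (ctil : ℕ) (hc : ∀ i, (B i).card ≤ ctil)
    (a b' : Bool) :
    |(1 / (N : ℝ) ^ 2) * ∑ i, ∑ j ∈ Finset.univ.erase i,
        bexp p (fun z =>
          μ i (Function.update (Function.update z i a) j b')
            * μ j (Function.update (Function.update z i a) j b'))
      - (1 / (N : ℝ) ^ 2) * ∑ i, ∑ j ∈ Finset.univ.erase i,
          bexp p (fun z => μ i (Function.update z i a))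
            * bexp p (fun z => μ j (Function.update z j b'))|
      ≤ 2 * ctil * b ^ 2 / N :=
  approx_bound_C41_general N p hp0 hp1 μ B hB b hb ctil hc a b'
end
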